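/- For L > 0 and a point (x₁, x₂) with L/2 ≤ x₁ ≤ L and x₂ ≥ x₁², the line through (x₁,x₂) and (L/2, 0) meets the parabola x₂ = x₁² at the point (u, u²) with u = √x₂·L/(√x₂ + √(x₂ - L(2x₁ - L))), and the function B(x;L) = (√x₂ + √(x₂-L(2x₁-L)))² is affine along each such line: for any two points x, y on the same line through (L/2,0) within the domain, and any t ∈ [0,1], B(tx+(1-t)y; L) = tB(x;L) + (1-t)B(y;L). -/

import Mathlib

/-- Right branch of the maximal-operator Bellman function. -/
noncomputable def MB (L x₁ x₂ : ℝ) : ℝ :=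
  (Real.sqrt x₂ + Real.sqrt (x₂ - L * (2 * x₁ - L))) ^ 2

lemma MB_expand (L a b : ℝ) (hb : 0 ≤ b) (hd : 0 ≤ b - L * (2 * a - L)) :
    MB L a b = b + (b - L * (2 * a - L)) +
      2 * Real.sqrt b * Real.sqrt (b - L * (2 * a - L)) := by
  unfold MB
  rw [add_sq, Real.sq_sqrt hb, Real.sq_sqrt hd]
  ring

theorem maximal_extremal_lines (L : ℝ) (hL : 0 < L) :
    (∀ x₁ x₂ : ℝ, L / 2 ≤ x₁ → x₁ ≤ L → x₁ ^ 2 ≤ x₂ →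
      let u : ℝ := Real.sqrt x₂ * L /
        (Real.sqrt x₂ + Real.sqrt (x₂ - L * (2 * x₁ - L)))
      (u - L / 2) * x₂ = (x₁ - L / 2) * u ^ 2) ∧
    (∀ p q : ℝ × ℝ,
      L / 2 ≤ p.1 → p.1 ≤ L → p.1 ^ 2 ≤ p.2 →
      L / 2 ≤ q.1 → q.1 ≤ L → q.1 ^ 2 ≤ q.2 →
      (p.1 - L / 2) * q.2 = (q.1 - L / 2) * p.2 →
      ∀ t : ℝ, 0 ≤ t → t ≤ 1 →
        MB L (t * p.1 + (1 - t) * q.1) (t * p.2 + (1 - t) * q.2) =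
          t * MB L p.1 p.2 + (1 - t) * MB L q.1 q.2) := by
  constructor
  · intro x₁ x₂ h1 h2 h3
    have hx2 : (0:ℝ) < x₂ := lt_of_lt_of_le (by nlinarith) h3
    have hD : 0 ≤ x₂ - L * (2 * x₁ - L) := by nlinarith
    set s := Real.sqrt x₂ with hs
    set d := Real.sqrt (x₂ - L * (2 * x₁ - L)) with hdd
    have hs2 : s ^ 2 = x₂ := Real.sq_sqrt hx2.le
    have hd2 : d ^ 2 = x₂ - L * (2 * x₁ - L) := Real.sq_sqrt hD
    have hspos : 0 < s := Real.sqrt_pos.mpr hx2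
    have hdnn : 0 ≤ d := Real.sqrt_nonneg _
    have hden : s + d ≠ 0 := by positivity
    dsimp only
    field_simp
    linear_combination (x₂ - L*(2*x₁-L))*hs2 - x₂*hd2
  · intro p q hp1 hp2 hp3 hq1 hq2 hq3 hcol t ht0 ht1
    have hp2nn : (0:ℝ) ≤ p.2 := le_trans (sq_nonneg _) hp3
    have hq2nn : (0:ℝ) ≤ q.2 := le_trans (sq_nonneg _) hq3
    have hDp : 0 ≤ p.2 - L * (2 * p.1 - L) := by nlinarith [sq_nonneg (p.1 - L)]
    have hDq : 0 ≤ q.2 - L * (2 * q.1 - L) := by nlinarith [sq_nonneg (q.1 - L)]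
    set z₁ := t * p.1 + (1 - t) * q.1 with hz1
    set z₂ := t * p.2 + (1 - t) * q.2 with hz2
    have hz2nn : 0 ≤ z₂ := by
      have := mul_nonneg ht0 hp2nn
      have := mul_nonneg (by linarith : (0:ℝ) ≤ 1 - t) hq2nn
      linarith
    have hDz : z₂ - L * (2 * z₁ - L) =
        t * (p.2 - L * (2 * p.1 - L)) + (1 - t) * (q.2 - L * (2 * q.1 - L)) := by
      simp only [hz1, hz2]; ring
    have hDznn : 0 ≤ z₂ - L * (2 * z₁ - L) := by
      rw [hDz]
      have := mul_nonneg ht0 hDp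
      have := mul_nonneg (by linarith : (0:ℝ) ≤ 1 - t) hDq
      linarith
    -- key cross identity
    have hkey : p.2 * (q.2 - L * (2 * q.1 - L)) = q.2 * (p.2 - L * (2 * p.1 - L)) := by
      nlinarith [hcol]
    have hcross : Real.sqrt p.2 * Real.sqrt (p.2 - L * (2 * p.1 - L)) *
        (Real.sqrt q.2 * Real.sqrt (q.2 - L * (2 * q.1 - L))) =
        p.2 * (q.2 - L * (2 * q.1 - L)) := by
      rw [show Real.sqrt p.2 * Real.sqrt (p.2 - L * (2 * p.1 - L)) *
          (Real.sqrt q.2 * Real.sqrt (q.2 - L * (2 * q.1 - L))) =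
          (Real.sqrt p.2 * Real.sqrt (q.2 - L * (2 * q.1 - L))) *
          (Real.sqrt q.2 * Real.sqrt (p.2 - L * (2 * p.1 - L))) by ring,
        ← Real.sqrt_mul hp2nn, ← Real.sqrt_mul hq2nn, ← hkey,
        ← Real.sqrt_mul (mul_nonneg hp2nn hDq)]
      rw [show p.2 * (q.2 - L * (2 * q.1 - L)) * (p.2 * (q.2 - L * (2 * q.1 - L))) =
          (p.2 * (q.2 - L * (2 * q.1 - L))) ^ 2 by ring]
      exact Real.sqrt_sq (mul_nonneg hp2nn hDq)
    -- the sqrt term is linear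
    have hsqrtlin : Real.sqrt z₂ * Real.sqrt (z₂ - L * (2 * z₁ - L)) =
        t * (Real.sqrt p.2 * Real.sqrt (p.2 - L * (2 * p.1 - L))) +
        (1 - t) * (Real.sqrt q.2 * Real.sqrt (q.2 - L * (2 * q.1 - L))) := by
      rw [← Real.sqrt_mul hz2nn]
      have hRHS : z₂ * (z₂ - L * (2 * z₁ - L)) =
          (t * (Real.sqrt p.2 * Real.sqrt (p.2 - L * (2 * p.1 - L))) +
           (1 - t) * (Real.sqrt q.2 * Real.sqrt (q.2 - L * (2 * q.1 - L)))) ^ 2 := by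
        have sp2 : Real.sqrt p.2 ^ 2 = p.2 := Real.sq_sqrt hp2nn
        have sq2 : Real.sqrt q.2 ^ 2 = q.2 := Real.sq_sqrt hq2nn
        have sDp : Real.sqrt (p.2 - L * (2 * p.1 - L)) ^ 2 = p.2 - L * (2 * p.1 - L) :=
          Real.sq_sqrt hDp
        have sDq : Real.sqrt (q.2 - L * (2 * q.1 - L)) ^ 2 = q.2 - L * (2 * q.1 - L) :=
          Real.sq_sqrt hDq
        rw [hDz]
        simp only [hz2]
        linear_combination (-(t^2) * Real.sqrt (p.2 - L * (2 * p.1 - L)) ^ 2) * sp2 +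
          (-(t^2) * p.2) * sDp +
          (-((1-t)^2) * Real.sqrt (q.2 - L * (2 * q.1 - L)) ^ 2) * sq2 +
          (-((1-t)^2) * q.2) * sDq +
          (-(2*t*(1-t))) * hcross + (-(t*(1-t))) * hkey
      rw [hRHS, Real.sqrt_sq]
      have h1 := mul_nonneg (Real.sqrt_nonneg p.2) (Real.sqrt_nonneg (p.2 - L * (2 * p.1 - L)))
      have h2 := mul_nonneg (Real.sqrt_nonneg q.2) (Real.sqrt_nonneg (q.2 - L * (2 * q.1 - L)))
      have := mul_nonneg ht0 h1
      have := mul_nonneg (by linarith : (0:ℝ) ≤ 1 - t) h2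
      linarith
    rw [MB_expand L z₁ z₂ hz2nn hDznn, MB_expand L p.1 p.2 hp2nn hDp,
      MB_expand L q.1 q.2 hq2nn hDq]
    linear_combination hz2 + hDz + 2 * hsqrtlin
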